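/- Over a field K, every additive functor F from K-vector spaces to abelian groups that preserves filtered colimits is naturally isomorphic to the functor V ↦ F(K) ⊗_K V; in particular it is exact and preserves all colimits. -/

import Mathlib

open CategoryTheory

variable (K : Type) [Field K] (F : ModuleCat K ⥤ AddCommGrpCat) [F.Additive]

/-- The canonical `K`-vector space structure on `F(K)`, given by `r • m = F(·r)(m)` where
`·r : K → K` is multiplication by `r`. -/
noncomputable def wattsModule : Module K (F.obj (ModuleCat.of K K)) where
  smul r m := F.map (ModuleCat.ofHom (LinearMap.lsmul K K r)) m
  one_smul m := by
    show F.map (ModuleCat.ofHom (LinearMap.lsmul K K 1)) m = m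
    have h : ModuleCat.ofHom (LinearMap.lsmul K K 1) = 𝟙 (ModuleCat.of K K) := by
      ext x; simp
    rw [h, F.map_id]; rfl
  mul_smul r s m := by
    show F.map (ModuleCat.ofHom (LinearMap.lsmul K K (r * s))) m = _
    have h : ModuleCat.ofHom (LinearMap.lsmul K K (r * s)) =
        ModuleCat.ofHom (LinearMap.lsmul K K s) ≫ ModuleCat.ofHom (LinearMap.lsmul K K r) := by
      ext x; simp [mul_smul, mul_comm, mul_assoc, mul_left_comm]
    rw [h, F.map_comp]; rfl
  smul_zero r := map_zero _
  smul_add r m₁ m₂ := map_add _ m₁ m₂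
  add_smul r s m := by
    show F.map (ModuleCat.ofHom (LinearMap.lsmul K K (r + s))) m = _
    have h : ModuleCat.ofHom (LinearMap.lsmul K K (r + s)) =
        ModuleCat.ofHom (LinearMap.lsmul K K r) + ModuleCat.ofHom (LinearMap.lsmul K K s) := by
      ext x; simp [add_smul, LinearMap.add_apply]
    rw [h, F.map_add]; rfl
  zero_smul m := by
    show F.map (ModuleCat.ofHom (LinearMap.lsmul K K 0)) m = 0
    have h : ModuleCat.ofHom (LinearMap.lsmul K K 0) = 0 := by ext x; simp
    rw [h, F.map_zero]; rfl

section WattsAux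

open CategoryTheory.Limits MonoidalCategory

namespace WattsAux

variable {C D : Type*} [Category C] [Category D]

/-- If a natural transformation is an iso at the objects of a diagram, and both functors
preserve a colimit cocone of the diagram, it is an iso at the cocone point. -/
lemma isIso_app_of_isColimit {J : Type*} [Category J] {Dg : J ⥤ C} {c : Cocone Dg}
    {G₁ G₂ : C ⥤ D} (η : G₁ ⟶ G₂)
    (h₁ : IsColimit (G₁.mapCocone c)) (h₂ : IsColimit (G₂.mapCocone c))
    (hη : ∀ j, IsIso (η.app (Dg.obj j))) : IsIso (η.app c.pt) := by
  have : ∀ j, IsIso ((Functor.whiskerLeft Dg η).app j) := fun j => hη j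
  have : IsIso (Functor.whiskerLeft Dg η) := NatIso.isIso_of_isIso_app _
  let w : Dg ⋙ G₁ ≅ Dg ⋙ G₂ := asIso (Functor.whiskerLeft Dg η)
  have : η.app c.pt = (IsColimit.coconePointsIsoOfNatIso h₁ h₂ w).hom := by
    apply h₁.hom_ext
    intro j
    rw [IsColimit.comp_coconePointsIsoOfNatIso_hom]
    exact η.naturality (c.ι.app j)
  rw [this]
  infer_instance

lemma isIso_app_of_iso {G₁ G₂ : C ⥤ D} (η : G₁ ⟶ G₂) {V W : C} (e : V ≅ W)
    (h : IsIso (η.app W)) : IsIso (η.app V) := by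
  have : η.app V = G₁.map e.hom ≫ η.app W ≫ G₂.map e.inv := by
    rw [η.naturality_assoc, ← G₂.map_comp, e.hom_inv_id, G₂.map_id, Category.comp_id]
  rw [this]; infer_instance

end WattsAux

instance (V : ModuleCat K) : CategoryTheory.Projective V :=
  ModuleCat.projective_of_free (Module.Basis.ofVectorSpace K V)

lemma watts_exact : Limits.PreservesFiniteLimits F ∧ Limits.PreservesFiniteColimits F := by
  have h : ∀ (S : ShortComplex (ModuleCat K)), S.ShortExact → ((S.map F).ShortExact) :=
    fun S hS => ((hS.splittingOfProjective).map F).shortExact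
  exact (Functor.exact_tfae F).out 0 3 |>.1 h

/-- `F(K)` as an object of `ModuleCat K`, with the `wattsModule` structure. -/
noncomputable abbrev wattsM : ModuleCat K :=
  letI := wattsModule K F
  ModuleCat.of K (F.obj (ModuleCat.of K K))

/-- The tensor functor `F(K) ⊗ -` composed with the forgetful functor. -/
noncomputable def wattsG : ModuleCat K ⥤ AddCommGrpCat :=
  tensorLeft (wattsM K F) ⋙ forget₂ (ModuleCat K) AddCommGrpCat

/-- The bi-additive pairing `F(K) → V → F(V)`, `(m, v) ↦ F(v̂)(m)`. -/
noncomputable def wattsPairing (V : ModuleCat K) :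
    F.obj (ModuleCat.of K K) →+ (V →+ F.obj V) where
  toFun m :=
    { toFun := fun v => F.map (ModuleCat.ofHom (LinearMap.toSpanSingleton K V v)) m
      map_zero' := by
        show F.map (ModuleCat.ofHom (LinearMap.toSpanSingleton K V 0)) m = 0
        have h0 : LinearMap.toSpanSingleton K V (0 : V) = 0 := by
          refine LinearMap.ext fun c => ?_; simp
        rw [h0]
        show F.map (0 : ModuleCat.of K K ⟶ V) m = 0
        rw [F.map_zero]; rfl
      map_add' := fun v w => by
        show F.map (ModuleCat.ofHom (LinearMap.toSpanSingleton K V (v + w))) m = _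
        have h1 : LinearMap.toSpanSingleton K V (v + w) =
            LinearMap.toSpanSingleton K V v + LinearMap.toSpanSingleton K V w := by
          refine LinearMap.ext fun c => ?_
          exact smul_add c v w
        rw [h1]
        show F.map (ModuleCat.ofHom (LinearMap.toSpanSingleton K V v) +
          ModuleCat.ofHom (LinearMap.toSpanSingleton K V w)) m = _
        rw [F.map_add]; rfl }
  map_zero' := by ext v; exact (F.map (ModuleCat.ofHom (LinearMap.toSpanSingleton K V v))).hom.map_zero
  map_add' m₁ m₂ := by ext v; exact (F.map (ModuleCat.ofHom (LinearMap.toSpanSingleton K V v))).hom.map_add m₁ m₂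

lemma wattsPairing_balanced (V : ModuleCat K) (r : K)
    (m : F.obj (ModuleCat.of K K)) (v : V) :
    letI := wattsModule K F
    wattsPairing K F V (r • m) v = wattsPairing K F V m (r • v) := by
  letI := wattsModule K F
  show F.map (ModuleCat.ofHom (LinearMap.toSpanSingleton K V v))
      (F.map (ModuleCat.ofHom (LinearMap.lsmul K K r)) m) =
    F.map (ModuleCat.ofHom (LinearMap.toSpanSingleton K V (r • v))) m
  have h2 : (LinearMap.toSpanSingleton K V v).comp (LinearMap.lsmul K K r) =
      LinearMap.toSpanSingleton K V (r • v) := by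
    refine LinearMap.ext fun c => ?_
    show (r * c) • v = c • r • v
    rw [mul_comm, mul_smul]
  have h3 : ModuleCat.ofHom (LinearMap.lsmul K K r) ≫
      ModuleCat.ofHom (LinearMap.toSpanSingleton K V v) =
      ModuleCat.ofHom (LinearMap.toSpanSingleton K V (r • v)) := by
    show ModuleCat.ofHom ((LinearMap.toSpanSingleton K V v).comp (LinearMap.lsmul K K r)) = _
    rw [h2]
  rw [← h3, F.map_comp]; rfl

/-- The natural transformation `F(K) ⊗ V → F(V)`. -/
noncomputable def wattsTrans : wattsG K F ⟶ F :=
  letI := wattsModule K F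
  { app := fun V =>
      (AddCommGrpCat.ofHom (TensorProduct.liftAddHom (wattsPairing K F V) (wattsPairing_balanced K F V)) :
        AddCommGrpCat.of (TensorProduct K (wattsM K F) V) ⟶ F.obj V)
    naturality := fun V W f => by
      ext (x : TensorProduct K (wattsM K F) V)
      show TensorProduct.liftAddHom (wattsPairing K F W) (wattsPairing_balanced K F W)
          (LinearMap.lTensor (wattsM K F) f.hom x) =
        F.map f (TensorProduct.liftAddHom (wattsPairing K F V) (wattsPairing_balanced K F V) x)
      induction x using TensorProduct.induction_on with
      | zero => simp [map_zero]
      | add a b ha hb =>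
          rw [map_add, map_add, ha, hb, map_add, map_add]
      | tmul m v =>
          show TensorProduct.liftAddHom (wattsPairing K F W) (wattsPairing_balanced K F W)
              (m ⊗ₜ[K] f v) =
            F.map f (TensorProduct.liftAddHom (wattsPairing K F V)
              (wattsPairing_balanced K F V) (m ⊗ₜ[K] v))
          rw [TensorProduct.liftAddHom_tmul, TensorProduct.liftAddHom_tmul]
          show F.map (ModuleCat.ofHom (LinearMap.toSpanSingleton K W (f v))) m =
            F.map f (F.map (ModuleCat.ofHom (LinearMap.toSpanSingleton K V v)) m)
          have h2 : f.hom.comp (LinearMap.toSpanSingleton K V v) =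
              LinearMap.toSpanSingleton K W (f v) := by
            refine LinearMap.ext fun c => ?_
            show f (c • v) = c • f v
            rw [map_smul]
          have h3 : ModuleCat.ofHom (LinearMap.toSpanSingleton K V v) ≫ f =
              ModuleCat.ofHom (LinearMap.toSpanSingleton K W (f v)) := by
            show ModuleCat.ofHom (f.hom.comp (LinearMap.toSpanSingleton K V v)) = _
            rw [h2]
          rw [← h3, F.map_comp]; rfl }

lemma watts_base : IsIso ((wattsTrans K F).app (ModuleCat.of K K)) := by
  letI := wattsModule K F
  have h : ∀ x, ((wattsTrans K F).app (ModuleCat.of K K)) x =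
      TensorProduct.rid K (wattsM K F) x := by
    intro x
    show TensorProduct.liftAddHom (wattsPairing K F (ModuleCat.of K K))
      (wattsPairing_balanced K F (ModuleCat.of K K)) x = _
    induction x using TensorProduct.induction_on with
    | zero => rw [map_zero, map_zero]
    | add a b ha hb => rw [map_add, map_add, ha, hb]
    | tmul m c =>
        show TensorProduct.liftAddHom (wattsPairing K F (ModuleCat.of K K))
            (wattsPairing_balanced K F (ModuleCat.of K K)) (m ⊗ₜ[K] c) = _
        rw [TensorProduct.liftAddHom_tmul, TensorProduct.rid_tmul]
        show F.map (ModuleCat.ofHom (LinearMap.toSpanSingleton K (ModuleCat.of K K) c)) m =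
          c • m
        have h1 : ModuleCat.ofHom (LinearMap.toSpanSingleton K (ModuleCat.of K K) c) =
            ModuleCat.ofHom (LinearMap.lsmul K K c) :=
          ModuleCat.hom_ext (LinearMap.ext fun x => @mul_comm K _ x c)
        rw [h1]
        rfl
  rw [CategoryTheory.ConcreteCategory.isIso_iff_bijective]
  show Function.Bijective ⇑((wattsTrans K F).app (ModuleCat.of K K))
  have he : ⇑((wattsTrans K F).app (ModuleCat.of K K)) =
      ⇑(TensorProduct.rid K (wattsM K F)) := funext h
  rw [he]
  exact (TensorProduct.rid K (wattsM K F)).bijective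

open CoproductsFromFiniteFiltered in
lemma watts_isIso_app [PreservesFilteredColimits F] (V : ModuleCat K) :
    IsIso ((wattsTrans K F).app V) := by
  have hfc : PreservesFiniteColimits F := (watts_exact K F).2
  haveI : PreservesFiniteCoproducts F := inferInstance
  haveI : PreservesColimits (wattsG K F) := comp_preservesColimits _ _
  classical
  let b := Module.Basis.ofVectorSpace K V
  let ι := Module.Basis.ofVectorSpaceIndex K V
  let Z : ι → ModuleCat K := fun _ => ModuleCat.of K K
  let Dd : Discrete ι ⥤ ModuleCat K := Discrete.functor Z
  have hstage : ∀ s : Finset (Discrete ι),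
      IsIso ((wattsTrans K F).app ((liftToFinsetObj Dd).obj s)) := by
    intro s
    apply WattsAux.isIso_app_of_isColimit (wattsTrans K F)
      (isColimitOfPreserves _ (colimit.isColimit _))
      (isColimitOfPreserves _ (colimit.isColimit _))
    intro j
    exact watts_base K F
  have hW : IsIso ((wattsTrans K F).app (colimit (liftToFinsetObj Dd))) := by
    apply WattsAux.isIso_app_of_isColimit (wattsTrans K F)
      (isColimitOfPreserves _ (colimit.isColimit _))
      (isColimitOfPreserves _ (colimit.isColimit _)) hstage
  let e₁ : V ≅ ModuleCat.of K (DirectSum ι (fun _ => K)) :=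
    (b.repr ≪≫ₗ finsuppLEquivDirectSum K K ι).toModuleIso
  let e₂ : ModuleCat.of K (DirectSum ι (fun _ => K)) ≅ colimit (liftToFinsetObj Dd) :=
    IsColimit.coconePointUniqueUpToIso (ModuleCat.coproductCoconeIsColimit Z)
      (liftToFinsetColimitCocone Dd).isColimit
  exact WattsAux.isIso_app_of_iso (wattsTrans K F) (e₁ ≪≫ e₂) hW
end WattsAux

/-- Over a field `K`, every additive functor `F : ModuleCat K ⥤ AddCommGrpCat` preserving
filtered colimits is naturally isomorphic to `V ↦ F(K) ⊗_K V`; in particular `F` is exact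
(preserves finite limits and finite colimits) and preserves all colimits. -/
theorem stmt18 [CategoryTheory.Limits.PreservesFilteredColimits F] :
    letI := wattsModule K F
    Nonempty (F ≅
      MonoidalCategory.tensorLeft (ModuleCat.of K (F.obj (ModuleCat.of K K))) ⋙
        forget₂ (ModuleCat K) AddCommGrpCat) ∧
    Nonempty (CategoryTheory.Limits.PreservesFiniteLimits F) ∧
    Nonempty (CategoryTheory.Limits.PreservesFiniteColimits F) ∧
    Nonempty (CategoryTheory.Limits.PreservesColimits F) := by
  letI := wattsModule K F
  haveI : ∀ V, IsIso ((wattsTrans K F).app V) := watts_isIso_app K F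
  haveI : IsIso (wattsTrans K F) := NatIso.isIso_of_isIso_app _
  haveI : Limits.PreservesColimits (wattsG K F) := Limits.comp_preservesColimits _ _
  refine ⟨⟨(asIso (wattsTrans K F)).symm⟩, ⟨(watts_exact K F).1⟩, ⟨(watts_exact K F).2⟩,
    ⟨Limits.preservesColimits_of_natIso (asIso (wattsTrans K F))⟩⟩
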